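/- arXiv:1608.08619 — 3 statements merged into one kernel-verified Lean document; each statement's English description precedes it below -/
import Mathlib

section
/- Let R be a G-graded unital ring such that every R_g is a simple R_e-bimodule. Then the following are equivalent: (i) for all subsets S, T ⊆ G, R_S ≅ R_T as R_e-bimodules iff S = T; (ii) for all g, h ∈ G, R_g ≅ R_h iff g = h. -/
open DirectSum Pointwise

namespace Controlled

variable {G R : Type*} [AddGroup G] [DecidableEq G] [Ring R]

/-- `P` is an `R_e`-sub-bimodule of `R` (w.r.t. the grading `𝒜`, written additively,
so `R_e = 𝒜 0`). -/
def IsSubBimodule (𝒜 : G → AddSubgroup R) (P : AddSubgroup R) : Prop :=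
  ∀ a ∈ 𝒜 0, ∀ x ∈ P, a * x ∈ P ∧ x * a ∈ P

/-- The `R_e`-bimodule `R_H = ⊕_{h ∈ H} R_h` (internally, the subgroup generated by
the `R_h`, `h ∈ H`; the sum is automatically direct). `R_∅ = ⊥ = {0}`. -/
def RH (𝒜 : G → AddSubgroup R) (H : Set G) : AddSubgroup R := ⨆ h ∈ H, 𝒜 h

/-- An `R_e`-bimodule isomorphism between additive subgroups `P` and `Q` of `R`:
an additive equivalence compatible with left and right multiplication by `R_e = 𝒜 0`. -/
structure BimodIso (𝒜 : G → AddSubgroup R) (P Q : AddSubgroup R) where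
  toEquiv : P ≃+ Q
  map_left : ∀ (a x : R), a ∈ 𝒜 0 → ∀ (hx : x ∈ P) (hax : a * x ∈ P),
    (toEquiv ⟨a * x, hax⟩ : R) = a * (toEquiv ⟨x, hx⟩ : R)
  map_right : ∀ (a x : R), a ∈ 𝒜 0 → ∀ (hx : x ∈ P) (hxa : x * a ∈ P),
    (toEquiv ⟨x * a, hxa⟩ : R) = (toEquiv ⟨x, hx⟩ : R) * a

/-- `R` is `G`-controlled: `H ↦ R_H` is a bijection from subsets of `G` onto the
`R_e`-sub-bimodules of `R`, and `R_S ≅ R_T` (as `R_e`-bimodules) iff `S = T`. -/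
def IsControlled (𝒜 : G → AddSubgroup R) : Prop :=
  (∀ H : Set G, IsSubBimodule 𝒜 (RH 𝒜 H)) ∧
  Function.Injective (RH 𝒜) ∧
  (∀ P : AddSubgroup R, IsSubBimodule 𝒜 P → ∃ H : Set G, RH 𝒜 H = P) ∧
  (∀ S T : Set G, Nonempty (BimodIso 𝒜 (RH 𝒜 S) (RH 𝒜 T)) ↔ S = T)

/-- `P` is a (nonzero) simple `R_e`-bimodule contained in `R`. -/
def IsSimpleBimod (𝒜 : G → AddSubgroup R) (P : AddSubgroup R) : Prop :=
  P ≠ ⊥ ∧ ∀ Q : AddSubgroup R, Q ≤ P → IsSubBimodule 𝒜 Q → Q = ⊥ ∨ Q = P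

/-- The product `AB` of two additive subgroups of `R`: all finite sums of products. -/
def mulSub (A B : AddSubgroup R) : AddSubgroup R :=
  AddSubgroup.closure ((A : Set R) * (B : Set R))

/-- `R` is strongly graded: `R_g R_h = R_{g+h}` for all `g, h`. -/
def IsStronglyGraded (𝒜 : G → AddSubgroup R) : Prop :=
  ∀ g h : G, mulSub (𝒜 g) (𝒜 h) = 𝒜 (g + h)

/-- `C_R(R_e) = Z(R_e)` as subsets of `R`. -/
def CentralizerEqCenter (𝒜 : G → AddSubgroup R) : Prop :=
  {x : R | ∀ r ∈ 𝒜 0, x * r = r * x} = {x : R | x ∈ 𝒜 0 ∧ ∀ r ∈ 𝒜 0, x * r = r * x}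

/-- A two-sided ideal `I` is graded if each homogeneous component of each of its
elements again lies in `I` (equivalently, `I = ⊕_g (I ∩ R_g)`). -/
def IsGradedIdeal (𝒜 : G → AddSubgroup R) [GradedRing 𝒜] (I : TwoSidedIdeal R) : Prop :=
  ∀ x ∈ I, ∀ g : G, (DirectSum.decompose 𝒜 x g : R) ∈ I

/-- `R` is graded simple: the only graded two-sided ideals are `{0}` and `R`. -/
def IsGradedSimple (𝒜 : G → AddSubgroup R) [GradedRing 𝒜] : Prop :=
  ∀ I : TwoSidedIdeal R, IsGradedIdeal 𝒜 I → I = ⊥ ∨ I = ⊤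

end Controlled

variable {G R : Type*} [AddGroup G] [DecidableEq G] [Ring R]

/-!
An isomorphism `φ : R_S ≅ R_T` sends a nonzero `x ∈ R_s` (`s ∈ S`) to an element with a nonzero
component in some `R_t`, `t ∈ T`. Projecting onto that component gives a nonzero bimodule map
`R_s → R_t` between simple bimodules, an isomorphism by Schur's lemma; hence `s = t ∈ T`, and
`T ⊆ S` by symmetry. The other implication is the case of singletons.
-/

theorem AddSubgroup.map_subtype_eq_self_iff {A : Type*} [AddGroup A] {H : AddSubgroup A}
    {K : AddSubgroup H} : K.map H.subtype = H ↔ K = ⊤ := by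
  have map_top : (⊤ : AddSubgroup H).map H.subtype = H := by
    rw [← AddMonoidHom.range_eq_map, AddSubgroup.range_subtype]
  rw [← AddSubgroup.map_subtype_inj, map_top]

namespace Controlled

section BimodHom

variable {G R : Type*} [AddGroup G] [Ring R] {𝒜 : G → AddSubgroup R} {P Q : AddSubgroup R}

variable (𝒜) in
structure IsBimodHom (f : P →+ Q) : Prop where
  map_left : ∀ (a : R), a ∈ 𝒜 0 → ∀ (x : P) (hax : a * (x : R) ∈ P),
    (f ⟨a * x, hax⟩ : R) = a * (f x : R)
  map_right : ∀ (a : R), a ∈ 𝒜 0 → ∀ (x : P) (hxa : (x : R) * a ∈ P),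
    (f ⟨x * a, hxa⟩ : R) = (f x : R) * a

lemma IsBimodHom.isSubBimodule_map_ker {f : P →+ Q} (hf : IsBimodHom 𝒜 f)
    (hP : IsSubBimodule 𝒜 P) : IsSubBimodule 𝒜 (f.ker.map P.subtype) := by
  rintro a ha _ ⟨x, hx, rfl⟩
  have hx0 : (f x : R) = 0 := congrArg Subtype.val hx
  refine ⟨⟨⟨a * x, (hP a ha x x.2).1⟩, Subtype.ext ?_, rfl⟩,
    ⟨⟨x * a, (hP a ha x x.2).2⟩, Subtype.ext ?_, rfl⟩⟩
  · simp [hf.map_left a ha, hx0]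
  · simp [hf.map_right a ha, hx0]

lemma IsBimodHom.isSubBimodule_map_range {f : P →+ Q} (hf : IsBimodHom 𝒜 f)
    (hP : IsSubBimodule 𝒜 P) : IsSubBimodule 𝒜 (f.range.map Q.subtype) := by
  rintro a ha _ ⟨_, ⟨x, rfl⟩, rfl⟩
  exact ⟨⟨f ⟨a * x, (hP a ha x x.2).1⟩, ⟨_, rfl⟩, hf.map_left a ha x _⟩,
    ⟨f ⟨x * a, (hP a ha x x.2).2⟩, ⟨_, rfl⟩, hf.map_right a ha x _⟩⟩

/-- Schur's lemma. -/
theorem IsBimodHom.bijective {f : P →+ Q} (hf : IsBimodHom 𝒜 f) (hP : IsSubBimodule 𝒜 P)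
    (hPs : IsSimpleBimod 𝒜 P) (hQs : IsSimpleBimod 𝒜 Q) (hf0 : f ≠ 0) :
    Function.Bijective f := by
  constructor
  · rcases hPs.2 _ (AddSubgroup.map_subtype_le _) (hf.isSubBimodule_map_ker hP) with h | h
    · rw [← f.ker_eq_bot_iff]
      exact (AddSubgroup.map_eq_bot_iff_of_injective _ P.subtype_injective).mp h
    · rw [AddSubgroup.map_subtype_eq_self_iff, AddMonoidHom.ker_eq_top_iff] at h
      exact absurd h hf0
  · rcases hQs.2 _ (AddSubgroup.map_subtype_le _) (hf.isSubBimodule_map_range hP) with h | h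
    · rw [AddSubgroup.map_eq_bot_iff_of_injective _ Q.subtype_injective,
        AddMonoidHom.range_eq_bot_iff] at h
      exact absurd h hf0
    · rw [AddSubgroup.map_subtype_eq_self_iff] at h
      exact AddMonoidHom.range_eq_top.mp h

namespace BimodIso

noncomputable def ofBijective (f : P →+ Q) (hf : IsBimodHom 𝒜 f) (hbij : Function.Bijective f) :
    BimodIso 𝒜 P Q where
  toEquiv := AddEquiv.ofBijective f hbij
  map_left a x ha hx hax := hf.map_left a ha ⟨x, hx⟩ hax
  map_right a x ha hx hxa := hf.map_right a ha ⟨x, hx⟩ hxa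

def refl (P : AddSubgroup R) : BimodIso 𝒜 P P :=
  ⟨AddEquiv.refl P, fun _ _ _ _ _ => rfl, fun _ _ _ _ _ => rfl⟩

def symm (hP : IsSubBimodule 𝒜 P) (φ : BimodIso 𝒜 P Q) : BimodIso 𝒜 Q P where
  toEquiv := φ.toEquiv.symm
  map_left a y ha hy hay := by
    set x := φ.toEquiv.symm ⟨y, hy⟩
    have hax : a * (x : R) ∈ P := (hP a ha x x.2).1
    have h : φ.toEquiv ⟨a * x, hax⟩ = ⟨a * y, hay⟩ := by
      ext
      rw [φ.map_left a x ha x.2 hax, φ.toEquiv.apply_symm_apply]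
    rw [← h, AddEquiv.symm_apply_apply]
  map_right a y ha hy hya := by
    set x := φ.toEquiv.symm ⟨y, hy⟩
    have hxa : (x : R) * a ∈ P := (hP a ha x x.2).2
    have h : φ.toEquiv ⟨x * a, hxa⟩ = ⟨y * a, hya⟩ := by
      ext
      rw [φ.map_right a x ha x.2 hxa, φ.toEquiv.apply_symm_apply]
    rw [← h, AddEquiv.symm_apply_apply]

end BimodIso

end BimodHom

section Graded

variable {G R : Type*} [Ring R] {𝒜 : G → AddSubgroup R}

lemma le_RH {H : Set G} {g : G} (hg : g ∈ H) : 𝒜 g ≤ RH 𝒜 H :=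
  le_iSup₂ (f := fun h (_ : h ∈ H) => 𝒜 h) g hg

variable (𝒜) in
lemma RH_singleton (g : G) : RH 𝒜 {g} = 𝒜 g := by
  simp [RH]

variable [AddGroup G]

lemma isSubBimodule_apply [SetLike.GradedMonoid 𝒜] (g : G) : IsSubBimodule 𝒜 (𝒜 g) :=
  fun _ ha _ hx => ⟨zero_add g ▸ SetLike.mul_mem_graded ha hx,
    add_zero g ▸ SetLike.mul_mem_graded hx ha⟩

lemma isSubBimodule_RH [SetLike.GradedMonoid 𝒜] (H : Set G) : IsSubBimodule 𝒜 (RH 𝒜 H) := by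
  intro a ha x hx
  have : RH 𝒜 H ≤ (RH 𝒜 H).comap (AddMonoidHom.mulLeft a) ⊓
      (RH 𝒜 H).comap (AddMonoidHom.mulRight a) :=
    iSup₂_le fun g hg y hy =>
      ⟨le_RH hg ((isSubBimodule_apply g a ha y hy).1),
        le_RH hg ((isSubBimodule_apply g a ha y hy).2)⟩
  exact this hx

variable [DecidableEq G] [GradedRing 𝒜]

lemma decompose_RH_of_notMem {H : Set G} {x : R} (hx : x ∈ RH 𝒜 H) {g : G} (hg : g ∉ H) :
    (decompose 𝒜 x g : R) = 0 := by
  have : RH 𝒜 H ≤ (GradedRing.proj 𝒜 g).ker :=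
    iSup₂_le fun h hh y hy => by
      rw [AddMonoidHom.mem_ker, GradedRing.proj_apply,
        decompose_of_mem_ne 𝒜 hy (ne_of_mem_of_not_mem hh hg)]
  simpa [GradedRing.proj_apply] using this hx

lemma exists_mem_decompose_ne_zero {H : Set G} {x : R} (hx : x ∈ RH 𝒜 H) (hx0 : x ≠ 0) :
    ∃ g ∈ H, (decompose 𝒜 x g : R) ≠ 0 := by
  by_contra! h
  have : decompose 𝒜 x = 0 := DirectSum.ext fun g => Subtype.ext <| by
    by_cases hg : g ∈ H
    · simpa using h g hg
    · simpa using decompose_RH_of_notMem hx hg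
  exact hx0 ((decompose 𝒜).injective (this.trans (decompose_zero 𝒜).symm))

namespace BimodIso

variable {P P' Q : AddSubgroup R}

def restrictComponent (φ : BimodIso 𝒜 P Q) (h : P' ≤ P) (t : G) : P' →+ 𝒜 t :=
  (DFinsupp.evalAddMonoidHom t).comp <| (decomposeAddEquiv 𝒜).toAddMonoidHom.comp <|
    Q.subtype.comp <| φ.toEquiv.toAddMonoidHom.comp <| AddSubgroup.inclusion h

lemma coe_restrictComponent_apply (φ : BimodIso 𝒜 P Q) (h : P' ≤ P) (t : G) (x : P') :
    (φ.restrictComponent h t x : R) = decompose 𝒜 (φ.toEquiv ⟨x, h x.2⟩ : R) t :=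
  rfl

lemma isBimodHom_restrictComponent (φ : BimodIso 𝒜 P Q) (h : P' ≤ P) (t : G) :
    IsBimodHom 𝒜 (φ.restrictComponent h t) := by
  constructor <;> intro a ha x _ <;>
    simp only [coe_restrictComponent_apply]
  · rw [φ.map_left a x ha (h x.2) (h ‹_›), coe_decompose_mul_of_left_mem_zero 𝒜 ha]
  · rw [φ.map_right a x ha (h x.2) (h ‹_›), coe_decompose_mul_of_right_mem_zero 𝒜 ha]

end BimodIso

lemma mem_of_bimodIso_RH (hsimple : ∀ g : G, IsSimpleBimod 𝒜 (𝒜 g))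
    (hinj : ∀ g h : G, Nonempty (BimodIso 𝒜 (𝒜 g) (𝒜 h)) → g = h) {S T : Set G}
    (φ : BimodIso 𝒜 (RH 𝒜 S) (RH 𝒜 T)) {s : G} (hs : s ∈ S) : s ∈ T := by
  obtain ⟨x, hx0⟩ := AddSubgroup.ne_bot_iff_exists_ne_zero.mp (hsimple s).1
  have hφx : (φ.toEquiv ⟨x, le_RH hs x.2⟩ : R) ≠ 0 := fun h0 => by
    have hx : (⟨x, le_RH hs x.2⟩ : RH 𝒜 S) = 0 := φ.toEquiv.map_eq_zero_iff.mp (Subtype.ext h0)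
    exact hx0 (Subtype.ext (congrArg Subtype.val hx :))
  obtain ⟨t, ht, hxt⟩ := exists_mem_decompose_ne_zero (φ.toEquiv _).2 hφx
  have hf := φ.isBimodHom_restrictComponent (le_RH hs) t
  have hf0 : φ.restrictComponent (le_RH hs) t ≠ 0 := fun h0 => hxt <| by
    rw [← φ.coe_restrictComponent_apply, h0, AddMonoidHom.zero_apply, ZeroMemClass.coe_zero]
  have hbij := hf.bijective (isSubBimodule_apply s) (hsimple s) (hsimple t) hf0
  exact hinj s t ⟨BimodIso.ofBijective _ hf hbij⟩ ▸ ht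

end Graded

end Controlled

/-- If each `R_g` is a simple `R_e`-bimodule, then
(`R_S ≅ R_T ↔ S = T` for all subsets) iff (`R_g ≅ R_h ↔ g = h` for all group elements). -/
theorem stmt8 (𝒜 : G → AddSubgroup R) [GradedRing 𝒜]
    (hsimple : ∀ g : G, Controlled.IsSimpleBimod 𝒜 (𝒜 g)) :
    (∀ S T : Set G,
        Nonempty (Controlled.BimodIso 𝒜 (Controlled.RH 𝒜 S) (Controlled.RH 𝒜 T)) ↔ S = T) ↔
    (∀ g h : G, Nonempty (Controlled.BimodIso 𝒜 (𝒜 g) (𝒜 h)) ↔ g = h) := by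
  open Controlled in
  refine ⟨fun hRH g h => ?_, fun hA S T => ⟨fun ⟨φ⟩ => ?_, ?_⟩⟩
  · rw [← RH_singleton 𝒜 g, ← RH_singleton 𝒜 h, hRH, Set.singleton_eq_singleton_iff]
  · have hinj := fun g h => (hA g h).mp
    exact subset_antisymm (fun s => mem_of_bimodIso_RH hsimple hinj φ)
      (fun t => mem_of_bimodIso_RH hsimple hinj (φ.symm (isSubBimodule_RH S)))
  · rintro rfl
    exact ⟨BimodIso.refl _⟩
end

section
/- Let R be a G-graded unital ring which is G-controlled. If R_g R_{g⁻¹} = R_e for some g ∈ G, then R_{g⁻¹} R_g = R_e. -/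
open DirectSum Pointwise

variable {G R : Type*} [AddGroup G] [DecidableEq G] [Ring R]


private lemma AG_mul_assoc (A B C : AddSubgroup R) : A * B * C = A * (B * C) := by
  apply AddSubgroup.toAddSubmonoid_injective
  simp only [AddSubgroup.mul_toAddSubmonoid, mul_assoc]

private lemma AG_mul_bot (A : AddSubgroup R) : A * ⊥ = ⊥ := by
  apply AddSubgroup.toAddSubmonoid_injective
  simp [AddSubgroup.mul_toAddSubmonoid, AddSubmonoid.mul_bot]

private lemma AG_bot_mul (A : AddSubgroup R) : ⊥ * A = ⊥ := by
  apply AddSubgroup.toAddSubmonoid_injective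
  simp [AddSubgroup.mul_toAddSubmonoid, AddSubmonoid.bot_mul]

private lemma mulSub_eq_mul (A B : AddSubgroup R) : Controlled.mulSub A B = A * B := by
  apply le_antisymm
  · refine (AddSubgroup.closure_le _).2 ?_
    rintro x ⟨a, ha, b, hb, rfl⟩
    exact AddSubmonoid.mul_mem_mul ha hb
  · intro x hx
    refine AddSubmonoid.mul_induction_on hx ?_ ?_
    · intro m hm n hn
      exact AddSubgroup.subset_closure ⟨m, hm, n, hn, rfl⟩
    · intro a b ha hb; exact add_mem ha hb

private lemma RH_singleton (𝒜 : G → AddSubgroup R) (h : G) :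
    Controlled.RH 𝒜 {h} = 𝒜 h := by simp [Controlled.RH]

private lemma RH_empty (𝒜 : G → AddSubgroup R) :
    Controlled.RH 𝒜 (∅ : Set G) = ⊥ := by simp [Controlled.RH]

private lemma AG_mul_le (𝒜 : G → AddSubgroup R) [GradedRing 𝒜] (a b : G) :
    𝒜 a * 𝒜 b ≤ 𝒜 (a + b) := by
  intro x hx
  refine AddSubmonoid.mul_induction_on hx ?_ ?_
  · intro m hm n hn; exact SetLike.mul_mem_graded hm hn
  · intro u v hu hv; exact add_mem hu hv

/-- If `R` is `G`-controlled and `R_g R_{g⁻¹} = R_e`, then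
`R_{g⁻¹} R_g = R_e`. -/
theorem stmt11 (𝒜 : G → AddSubgroup R) [GradedRing 𝒜]
    (hc : Controlled.IsControlled 𝒜) (g : G)
    (h : Controlled.mulSub (𝒜 g) (𝒜 (-g)) = 𝒜 0) :
    Controlled.mulSub (𝒜 (-g)) (𝒜 g) = 𝒜 0 := by
  rw [mulSub_eq_mul] at h ⊢
  set J : AddSubgroup R := 𝒜 (-g) * 𝒜 g with hJ
  have hJle : J ≤ 𝒜 0 := by
    have := AG_mul_le 𝒜 (-g) g
    rwa [neg_add_cancel] at this
  -- J is a sub-bimodule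
  have hbimod : Controlled.IsSubBimodule 𝒜 J := by
    intro a ha x hx
    constructor
    · refine AddSubmonoid.mul_induction_on (C := fun x => a * x ∈ J) hx ?_ ?_
      · intro m hm n hn
        have ham : a * m ∈ 𝒜 (-g) := by
          have := SetLike.mul_mem_graded (A := 𝒜) ha hm
          rwa [zero_add (-g)] at this
        rw [← mul_assoc]
        exact AddSubmonoid.mul_mem_mul ham hn
      · intro u v hu hv
        rw [mul_add]; exact add_mem hu hv
    · refine AddSubmonoid.mul_induction_on (C := fun x => x * a ∈ J) hx ?_ ?_
      · intro m hm n hn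
        have hna : n * a ∈ 𝒜 g := by
          have := SetLike.mul_mem_graded (A := 𝒜) hn ha
          rwa [add_zero g] at this
        rw [mul_assoc]
        exact AddSubmonoid.mul_mem_mul hm hna
      · intro u v hu hv
        rw [add_mul]; exact add_mem hu hv
  obtain ⟨H, hH⟩ := hc.2.2.1 J hbimod
  -- H ⊆ {0}
  have hsub : H ⊆ ({0} : Set G) := by
    intro k hk
    by_contra hk0
    have hk0' : k ≠ 0 := hk0
    have hkle : 𝒜 k ≤ 𝒜 0 := by
      have hk2 : 𝒜 k ≤ Controlled.RH 𝒜 H :=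
        le_iSup₂ (f := fun h (_ : h ∈ H) => 𝒜 h) k hk
      rw [hH] at hk2
      exact le_trans hk2 hJle
    have hbot : 𝒜 k = ⊥ := by
      rw [eq_bot_iff]
      intro x hx
      have hx0 : x ∈ 𝒜 0 := hkle hx
      have h1 : (DirectSum.decompose 𝒜 x 0 : R) = 0 :=
        DirectSum.decompose_of_mem_ne 𝒜 hx hk0'
      have h2 : (DirectSum.decompose 𝒜 x 0 : R) = x :=
        DirectSum.decompose_of_mem_same 𝒜 hx0
      simp [h2 ▸ h1]
    have : ({k} : Set G) = (∅ : Set G) := by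
      apply hc.2.1
      rw [RH_singleton, RH_empty, hbot]
    exact absurd this (by simp)
  rcases Set.subset_singleton_iff_eq.mp hsub with hE | hS
  · -- H = ∅ : then J = ⊥, and we show 𝒜 0 = ⊥ as well
    have hJbot : J = ⊥ := by rw [← hH, hE, RH_empty]
    have h00 : (𝒜 0 : AddSubgroup R) * 𝒜 0 = ⊥ := by
      calc 𝒜 0 * 𝒜 0 = 𝒜 g * 𝒜 (-g) * (𝒜 g * 𝒜 (-g)) := by rw [h]
        _ = 𝒜 g * (𝒜 (-g) * 𝒜 g * 𝒜 (-g)) := by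
            rw [AG_mul_assoc, ← AG_mul_assoc (𝒜 (-g))]
        _ = ⊥ := by rw [← hJ, hJbot, AG_bot_mul, AG_mul_bot]
    have h0bot : 𝒜 0 = ⊥ := by
      rw [eq_bot_iff]
      intro x hx
      have : (1 : R) * x ∈ (𝒜 0 : AddSubgroup R) * 𝒜 0 :=
        AddSubmonoid.mul_mem_mul (SetLike.one_mem_graded 𝒜) hx
      rw [one_mul, h00] at this
      exact this
    rw [hJbot, h0bot]
  · rw [← hH, hS, RH_singleton]
end

section
/- Let R be a strongly G-graded unital ring such that every R_g is a simple R_e-bimodule and C_R(R_e) = Z(R_e). Then R is a simple ring. -/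
/-!
Take a nonzero element `x` of a two-sided ideal `I` and a degree `g` with `x_g ≠ 0`.
Since `1 ∈ R_g R_{-g}`, some `a ∈ R_{-g}` has `a x_g ≠ 0`, so the degree-zero components of the
elements of `I` supported in `-g + supp x` form a nonzero sub-bimodule of `R_e`; by simplicity
of `R_e` one of them is `1`. Such an element `y` either commutes with `R_e`, and then lies in
`C_R(R_e) = Z(R_e) ⊆ R_e`, so `y = 1 ∈ I`; or some commutator `r y - y r` with `r ∈ R_e` is
a nonzero element of `I` with strictly smaller support. Induction on the support size gives
`1 ∈ I`.
-/

open DirectSum Pointwise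

variable {G R : Type*} [AddGroup G] [DecidableEq G] [Ring R]

namespace Controlled

lemma exists_mul_ne_zero_of_one_mem_mulSub {A B : AddSubgroup R} (h : (1 : R) ∈ mulSub A B)
    {x : R} (hx : x ≠ 0) : ∃ b ∈ B, b * x ≠ 0 := by
  by_contra! hB
  have : mulSub A B ≤ (AddMonoidHom.mulRight x).ker := by
    refine (AddSubgroup.closure_le _).2 ?_
    rintro _ ⟨a, -, b, hb, rfl⟩
    simp [mul_assoc, hB b hb]
  exact hx (by simpa using this h)

variable (𝒜 : G → AddSubgroup R) [GradedRing 𝒜]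

def supportedIn (T : Finset G) : AddSubgroup R :=
  ⨅ (k : G) (_ : k ∉ T), (GradedRing.proj 𝒜 k).ker

variable {𝒜}

lemma mem_supportedIn {T : Finset G} {x : R} :
    x ∈ supportedIn 𝒜 T ↔ ∀ k ∉ T, GradedRing.proj 𝒜 k x = 0 := by
  simp [supportedIn]

lemma exists_proj_ne_zero {T : Finset G} {x : R} (hxT : x ∈ supportedIn 𝒜 T) (hx : x ≠ 0) :
    ∃ g ∈ T, GradedRing.proj 𝒜 g x ≠ 0 := by
  by_contra! h
  refine hx ((decompose 𝒜).injective (DFinsupp.ext fun g => Subtype.ext ?_))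
  by_cases hg : g ∈ T
  · simpa using h g hg
  · simpa using mem_supportedIn.1 hxT g hg

lemma mem_supportedIn_support [∀ (i : G) (x : 𝒜 i), Decidable (x ≠ 0)] (x : R) :
    x ∈ supportedIn 𝒜 (decompose 𝒜 x).support :=
  mem_supportedIn.2 fun k hk => by simp [DFinsupp.notMem_support_iff.1 hk]

lemma mul_mem_supportedIn_vadd {T : Finset G} {i : G} {a x : R} (ha : a ∈ 𝒜 i)
    (hx : x ∈ supportedIn 𝒜 T) : a * x ∈ supportedIn 𝒜 (i +ᵥ T) := by
  refine mem_supportedIn.2 fun k hk => ?_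
  have hk' : -i + k ∉ T := fun h => hk (Finset.mem_vadd_finset.2 ⟨_, h, add_neg_cancel_left i k⟩)
  rw [GradedRing.proj_apply, ← add_neg_cancel_left i k,
    coe_decompose_mul_add_of_left_mem 𝒜 ha, ← GradedRing.proj_apply, mem_supportedIn.1 hx _ hk',
    mul_zero]

lemma mul_mem_supportedIn_of_left_mem_zero {T : Finset G} {r x : R} (hr : r ∈ 𝒜 0)
    (hx : x ∈ supportedIn 𝒜 T) : r * x ∈ supportedIn 𝒜 T := by
  simpa using mul_mem_supportedIn_vadd hr hx

lemma mul_mem_supportedIn_of_right_mem_zero {T : Finset G} {r x : R} (hr : r ∈ 𝒜 0)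
    (hx : x ∈ supportedIn 𝒜 T) : x * r ∈ supportedIn 𝒜 T := by
  refine mem_supportedIn.2 fun k hk => ?_
  rw [GradedRing.proj_apply, coe_decompose_mul_of_right_mem_zero 𝒜 hr, ← GradedRing.proj_apply,
    mem_supportedIn.1 hx k hk, zero_mul]

variable (𝒜)

def zeroComponents (I : TwoSidedIdeal R) (T : Finset G) : AddSubgroup R :=
  (I.asIdeal.toAddSubgroup ⊓ supportedIn 𝒜 T).map (GradedRing.proj 𝒜 0)

variable {𝒜}

lemma zeroComponents_le (I : TwoSidedIdeal R) (T : Finset G) : zeroComponents 𝒜 I T ≤ 𝒜 0 := by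
  rintro _ ⟨y, -, rfl⟩
  exact SetLike.coe_mem _

lemma isSubBimodule_zeroComponents (I : TwoSidedIdeal R) (T : Finset G) :
    IsSubBimodule 𝒜 (zeroComponents 𝒜 I T) := by
  rintro r hr _ ⟨y, ⟨hyI, hyT⟩, rfl⟩
  refine ⟨⟨r * y, ⟨?_, mul_mem_supportedIn_of_left_mem_zero hr hyT⟩, ?_⟩,
    ⟨y * r, ⟨?_, mul_mem_supportedIn_of_right_mem_zero hr hyT⟩, ?_⟩⟩
  · exact I.mul_mem_left r y hyI
  · exact coe_decompose_mul_of_left_mem_zero 𝒜 hr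
  · exact I.mul_mem_right y r hyI
  · exact coe_decompose_mul_of_right_mem_zero 𝒜 hr

lemma commutator_mem_supportedIn_erase_zero {T : Finset G} {r y : R} (hr : r ∈ 𝒜 0)
    (hyT : y ∈ supportedIn 𝒜 T) (hy : Commute r (GradedRing.proj 𝒜 0 y)) :
    r * y - y * r ∈ supportedIn 𝒜 (T.erase 0) := by
  refine mem_supportedIn.2 fun k hk => ?_
  rw [map_sub, GradedRing.proj_apply, GradedRing.proj_apply,
    coe_decompose_mul_of_left_mem_zero 𝒜 hr, coe_decompose_mul_of_right_mem_zero 𝒜 hr,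
    ← GradedRing.proj_apply]
  rcases eq_or_ne k 0 with rfl | hk0
  · exact sub_eq_zero.2 hy.eq
  · rw [mem_supportedIn.1 hyT k fun h => hk (Finset.mem_erase.2 ⟨hk0, h⟩), mul_zero, zero_mul,
      sub_self]

lemma exists_mem_supportedIn_vadd_proj_zero_eq_one (hstrong : IsStronglyGraded 𝒜)
    (hsimple0 : IsSimpleBimod 𝒜 (𝒜 0)) {I : TwoSidedIdeal R} {T : Finset G} {x : R}
    (hxI : x ∈ I) (hxT : x ∈ supportedIn 𝒜 T) (hx : x ≠ 0) :
    ∃ g ∈ T, ∃ y ∈ I, y ∈ supportedIn 𝒜 (-g +ᵥ T) ∧ GradedRing.proj 𝒜 0 y = 1 := by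
  obtain ⟨g, hgT, hxg⟩ := exists_proj_ne_zero hxT hx
  have h1 : (1 : R) ∈ mulSub (𝒜 g) (𝒜 (-g)) := by
    rw [hstrong, add_neg_cancel]
    exact SetLike.one_mem_graded 𝒜
  obtain ⟨a, ha, hax⟩ := exists_mul_ne_zero_of_one_mem_mulSub h1 hxg
  have hproj : GradedRing.proj 𝒜 0 (a * x) = a * GradedRing.proj 𝒜 g x := by
    have h := coe_decompose_mul_add_of_left_mem 𝒜 ha (b := x) (j := g)
    rwa [neg_add_cancel] at h
  have hne : zeroComponents 𝒜 I (-g +ᵥ T) ≠ ⊥ := by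
    intro h
    have hmem : GradedRing.proj 𝒜 0 (a * x) ∈ zeroComponents 𝒜 I (-g +ᵥ T) :=
      ⟨a * x, ⟨I.mul_mem_left a x hxI, mul_mem_supportedIn_vadd ha hxT⟩, rfl⟩
    rw [h, AddSubgroup.mem_bot, hproj] at hmem
    exact hax hmem
  have h1 : (1 : R) ∈ zeroComponents 𝒜 I (-g +ᵥ T) := by
    rw [(hsimple0.2 _ (zeroComponents_le I _) (isSubBimodule_zeroComponents I _)).resolve_left hne]
    exact SetLike.one_mem_graded 𝒜
  obtain ⟨y, ⟨hyI, hyT⟩, hy⟩ := h1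
  exact ⟨g, hgT, y, hyI, hyT, hy⟩

theorem one_mem_of_mem_supportedIn (hstrong : IsStronglyGraded 𝒜)
    (hsimple0 : IsSimpleBimod 𝒜 (𝒜 0)) (hcen : CentralizerEqCenter 𝒜) {I : TwoSidedIdeal R}
    (T : Finset G) {x : R} (hxI : x ∈ I) (hxT : x ∈ supportedIn 𝒜 T) (hx : x ≠ 0) :
    (1 : R) ∈ I := by
  obtain ⟨g, hgT, y, hyI, hyT, hy⟩ :=
    exists_mem_supportedIn_vadd_proj_zero_eq_one hstrong hsimple0 hxI hxT hx
  by_cases hcomm : ∀ r ∈ 𝒜 0, y * r = r * y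
  · have hy0 : y ∈ 𝒜 0 := ((Set.ext_iff.1 hcen y).1 hcomm).1
    have hy1 : y = 1 := by rw [← hy, GradedRing.proj_apply, decompose_of_mem_same 𝒜 hy0]
    exact hy1 ▸ hyI
  · obtain ⟨r, hr, hry⟩ := not_forall₂.1 hcomm
    have h0 : (0 : G) ∈ -g +ᵥ T := Finset.mem_vadd_finset.2 ⟨g, hgT, neg_add_cancel g⟩
    exact one_mem_of_mem_supportedIn hstrong hsimple0 hcen ((-g +ᵥ T).erase 0)
      (I.sub_mem (I.mul_mem_left r y hyI) (I.mul_mem_right y r hyI))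
      (commutator_mem_supportedIn_erase_zero hr hyT (hy ▸ Commute.one_right r))
      (sub_ne_zero.2 (Ne.symm hry))
termination_by T.card
decreasing_by
  rw [Finset.card_erase_of_mem h0, Finset.card_vadd_finset]
  exact Nat.sub_lt (Finset.card_pos.2 ⟨g, hgT⟩) one_pos

end Controlled

/-- If `R` is strongly `G`-graded, every `R_g` is a simple
`R_e`-bimodule, and `C_R(R_e) = Z(R_e)`, then `R` is a simple ring. -/
theorem stmt16 (𝒜 : G → AddSubgroup R) [GradedRing 𝒜]
    (hstrong : Controlled.IsStronglyGraded 𝒜)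
    (hsimple : ∀ g : G, Controlled.IsSimpleBimod 𝒜 (𝒜 g))
    (hcen : Controlled.CentralizerEqCenter 𝒜) :
    IsSimpleRing R := by
  classical
  obtain ⟨a, ha⟩ := (AddSubgroup.ne_bot_iff_exists_ne_zero).1 (hsimple 0).1
  have : Nontrivial R := ⟨⟨a, 0, by simpa using ha⟩⟩
  refine IsSimpleRing.of_eq_bot_or_eq_top fun I => or_iff_not_imp_left.2 fun hI => ?_
  obtain ⟨x, hxI, hx⟩ := SetLike.exists_of_lt (bot_lt_iff_ne_bot.2 hI)
  exact I.one_mem_iff.1 <| Controlled.one_mem_of_mem_supportedIn hstrong (hsimple 0) hcen _ hxI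
    (Controlled.mem_supportedIn_support x) hx
end
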